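/- arXiv:2405.11456 — 4 statements merged into one kernel-verified Lean document; each statement's English description precedes it below -/
import Mathlib

section
/- Correctness of the multi-factor fuzzy extractor (Proposition 1, MFFE Correctness). Let n ≥ 1, let B ∈ ℝ^{n×n} be an invertible matrix with associated lattice L(B) = {Bz : z ∈ ℤⁿ}, let K, H, Q be types, and let Enc, Dec : K → (Fin n → ℤ) → (Fin n → ℤ) be functions satisfying Dec k (Enc k m) = m for every key k ∈ K and every m ∈ ℤⁿ (correctness of the symmetric encryption). Let UH : (Fin n → ℤ) → H → Q be any function, fix k ∈ K and hval ∈ H, and let x, x' ∈ ℝⁿ be such that 0 is the unique closest lattice vector of x − x', i.e. ‖x − x'‖₂ < ‖x − x' − Bz‖₂ for every z ∈ ℤⁿ with z ≠ 0. Set m = ⌊B⁻¹x⌋ (coordinatewise floor), β = UH m hval (the generated key), and δ = B⁻¹x − Enc k m ∈ ℝⁿ (the sketch, with the integer vector Enc k m coerced into ℝⁿ). Then e := Enc k m is the unique minimizer over z ∈ ℤⁿ of z ↦ ‖B((B⁻¹x' − δ) − z)‖₂ (i.e. CV_L(B⁻¹x' − δ) = Enc k m in B-coordinates), and consequently UH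 (Dec k e) hval = β; that is, the reproduction procedure recovers exactly the key produced by the generation procedure. -/
/-- The Euclidean (ℓ²) norm of a vector in `ℝⁿ`. -/
noncomputable def l2norm {n : ℕ} (v : Fin n → ℝ) : ℝ := Real.sqrt (∑ i, v i ^ 2)

lemma l2norm_neg {n : ℕ} (v : Fin n → ℝ) : l2norm (-v) = l2norm v := by
  simp [l2norm, neg_sq]

/-- Correctness of the multi-factor fuzzy extractor (Proposition 1).
With `m = ⌊B⁻¹x⌋`, `β = UH m hval`, sketch `δ = B⁻¹x − Enc k m`, and a sample `x'`
such that `0` is the unique closest lattice vector of `x − x'`, the vector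
`e = Enc k m` is the unique minimizer over `ℤⁿ` of `z ↦ ‖B((B⁻¹x' − δ) − z)‖₂`
(i.e. `CV_L(B⁻¹x' − δ) = Enc k m` in `B`-coordinates), and consequently
`UH (Dec k e) hval = β`: the reproduction procedure recovers the generated key. -/
theorem mffe_correctness {n : ℕ} (hn : 1 ≤ n) {K H Q : Type*}
    (B : Matrix (Fin n) (Fin n) ℝ) (hB : IsUnit B)
    (Enc Dec : K → (Fin n → ℤ) → (Fin n → ℤ))
    (hED : ∀ (k : K) (m : Fin n → ℤ), Dec k (Enc k m) = m)
    (UH : (Fin n → ℤ) → H → Q) (k : K) (hval : H) (x x' : Fin n → ℝ)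
    (hclose : ∀ z : Fin n → ℤ, z ≠ 0 →
      l2norm (x - x') < l2norm (x - x' - B.mulVec fun i => (z i : ℝ)))
    (m : Fin n → ℤ) (hm : m = fun i => ⌊B⁻¹.mulVec x i⌋)
    (β : Q) (hβ : β = UH m hval)
    (δ : Fin n → ℝ) (hδ : δ = B⁻¹.mulVec x - fun i => (Enc k m i : ℝ))
    (e : Fin n → ℤ) (he : e = Enc k m) :
    (∀ z : Fin n → ℤ, z ≠ e →
      l2norm (B.mulVec ((B⁻¹.mulVec x' - δ) - fun i => (e i : ℝ))) <
        l2norm (B.mulVec ((B⁻¹.mulVec x' - δ) - fun i => (z i : ℝ)))) ∧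
    UH (Dec k e) hval = β := by
  have hdet : IsUnit B.det := (Matrix.isUnit_iff_isUnit_det B).mp hB
  have hBBinv : B * B⁻¹ = 1 := Matrix.mul_nonsing_inv B hdet
  have hcancel : ∀ v : Fin n → ℝ, B.mulVec (B⁻¹.mulVec v) = v := by
    intro v
    rw [Matrix.mulVec_mulVec, hBBinv, Matrix.one_mulVec]
  -- key algebraic identity
  have key : ∀ z : Fin n → ℤ,
      B.mulVec ((B⁻¹.mulVec x' - δ) - fun i => (z i : ℝ)) =
        (x' - x) + B.mulVec ((fun i => (e i : ℝ)) - fun i => (z i : ℝ)) := by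
    intro z
    have : (B⁻¹.mulVec x' - δ) - (fun i => (z i : ℝ)) =
        (B⁻¹.mulVec x' - B⁻¹.mulVec x) +
          ((fun i => (e i : ℝ)) - fun i => (z i : ℝ)) := by
      rw [hδ, he]
      funext i
      simp only [Pi.sub_apply, Pi.add_apply]
      ring
    rw [this, Matrix.mulVec_add, Matrix.mulVec_sub, hcancel, hcancel]
  have keyE : B.mulVec ((B⁻¹.mulVec x' - δ) - fun i => (e i : ℝ)) = x' - x := by
    rw [key e]
    simp [Matrix.mulVec_sub]
  constructor
  · intro z hz
    rw [keyE, key z]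
    have hzz : e - z ≠ 0 := sub_ne_zero_of_ne (Ne.symm hz)
    have := hclose (e - z) hzz
    have hcoe : (fun i => ((e - z) i : ℝ)) =
        ((fun i => (e i : ℝ)) - fun i => (z i : ℝ)) := by
      funext i; simp
    rw [hcoe] at this
    calc l2norm (x' - x) = l2norm (x - x') := by
          rw [← l2norm_neg (x - x')]; ring_nf
      _ < l2norm (x - x' - B.mulVec ((fun i => (e i : ℝ)) - fun i => (z i : ℝ))) := this
      _ = l2norm ((x' - x) + B.mulVec ((fun i => (e i : ℝ)) - fun i => (z i : ℝ))) := by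
          rw [← l2norm_neg ((x' - x) + _)]; ring_nf
  · rw [he, hED, hβ, hm]
end

section
/- Well-definedness of the triangular basis recursion. Let d > 0. Define S₀ = 0 and, recursively for k ≥ 1, r_k = √(d² − S_{k−1}), w_k = (d²/2 − S_{k−1}) / r_k, and S_k = S_{k−1} + w_k². Then for every k ≥ 0 one has 0 ≤ S_k < d²/2; in particular d² − S_k > d²/2 > 0, so r_{k+1} is well defined and satisfies r_{k+1} > d/√2 > 0, and the recursion can be continued indefinitely. The key induction step is: if 0 ≤ S < d²/2 and d > 0, then S + (d²/2 − S)²/(d² − S) < d²/2. -/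
/-- Well-definedness of the triangular basis recursion. With `S 0 = 0`,
`r (k+1) = √(d² − S k)`, `w (k+1) = (d²/2 − S k)/r (k+1)` and
`S (k+1) = S k + (w (k+1))²`, one has `0 ≤ S k < d²/2` for all `k`
(hence `d² − S k > d²/2 > 0` and `r (k+1) > d/√2 > 0`), and the key induction
step holds: if `0 ≤ S < d²/2` and `d > 0` then
`S + (d²/2 − S)²/(d² − S) < d²/2`. -/
theorem triangular_recursion_well_defined (d : ℝ) (hd : 0 < d)
    (S r w : ℕ → ℝ)
    (hS0 : S 0 = 0)
    (hr : ∀ k : ℕ, r (k + 1) = Real.sqrt (d ^ 2 - S k))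
    (hw : ∀ k : ℕ, w (k + 1) = (d ^ 2 / 2 - S k) / r (k + 1))
    (hS : ∀ k : ℕ, S (k + 1) = S k + w (k + 1) ^ 2) :
    (∀ k : ℕ, 0 ≤ S k ∧ S k < d ^ 2 / 2) ∧
    (∀ k : ℕ, d ^ 2 / 2 < d ^ 2 - S k) ∧
    (∀ k : ℕ, d / Real.sqrt 2 < r (k + 1)) ∧
    (0 < d / Real.sqrt 2) ∧
    (∀ S' : ℝ, 0 ≤ S' → S' < d ^ 2 / 2 →
      S' + (d ^ 2 / 2 - S') ^ 2 / (d ^ 2 - S') < d ^ 2 / 2) := by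
  have hd2 : 0 < d ^ 2 := by positivity
  have key : ∀ S' : ℝ, 0 ≤ S' → S' < d ^ 2 / 2 →
      S' + (d ^ 2 / 2 - S') ^ 2 / (d ^ 2 - S') < d ^ 2 / 2 := by
    intro S' h0 h1
    have hpos : 0 < d ^ 2 / 2 - S' := by linarith
    have hpos2 : 0 < d ^ 2 - S' := by linarith
    have : (d ^ 2 / 2 - S') ^ 2 / (d ^ 2 - S') < d ^ 2 / 2 - S' := by
      rw [div_lt_iff₀ hpos2]
      nlinarith
    linarith
  have main : ∀ k : ℕ, 0 ≤ S k ∧ S k < d ^ 2 / 2 := by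
    intro k
    induction k with
    | zero => constructor <;> [rw [hS0]; rw [hS0]] <;> linarith
    | succ n ih =>
      obtain ⟨h0, h1⟩ := ih
      have hpos : 0 < d ^ 2 / 2 - S n := by linarith
      have hpos2 : 0 < d ^ 2 - S n := by linarith
      have hrn : r (n + 1) = Real.sqrt (d ^ 2 - S n) := hr n
      have hrpos : 0 < r (n + 1) := by rw [hrn]; exact Real.sqrt_pos.2 hpos2
      have hrsq : r (n + 1) ^ 2 = d ^ 2 - S n := by
        rw [hrn, Real.sq_sqrt hpos2.le]
      have hwsq : w (n + 1) ^ 2 = (d ^ 2 / 2 - S n) ^ 2 / (d ^ 2 - S n) := by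
        rw [hw n, div_pow, hrsq]
      have hSn : S (n + 1) = S n + (d ^ 2 / 2 - S n) ^ 2 / (d ^ 2 - S n) := by
        rw [hS n, hwsq]
      constructor
      · rw [hSn]; positivity
      · rw [hSn]; exact key _ h0 h1
  have gap : ∀ k : ℕ, d ^ 2 / 2 < d ^ 2 - S k := fun k => by
    have := (main k).2; linarith
  refine ⟨main, gap, fun k => ?_, by positivity, key⟩
  have heq : d / Real.sqrt 2 = Real.sqrt (d ^ 2 / 2) := by
    rw [Real.sqrt_div (by positivity : (0:ℝ) ≤ d ^ 2), Real.sqrt_sq hd.le]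
  rw [hr k, heq]
  exact Real.sqrt_lt_sqrt (by positivity) (gap k)
end

section
/- Monotonicity of closest-vector coordinates in a triangular lattice. Let d > 0, n ≥ 1, and let b₁, …, bₙ be vectors in a real inner product space with ‖b_i‖ = d for all i and ⟨b_i, b_j⟩ = d²/2 for all i ≠ j. Let x̄ ∈ ℝⁿ and let ȳ ∈ ℤⁿ be a minimizer over z ∈ ℤⁿ of z ↦ ‖Σ_{i=1}^n (x̄_i − z_i) b_i‖. Then for all indices i, j: if x̄_i < x̄_j then ȳ_i ≤ ȳ_j. -/
/-!
The Gram matrix of a triangular basis is `d²/2 (J + I)`, so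
`‖∑ cᵢ bᵢ‖² = d²/2 ((∑ cᵢ)² + ∑ cᵢ²)`. Exchanging the entries `ȳᵢ, ȳⱼ` of a closest vector
keeps `∑ cᵢ` and `∑ ȳᵢ²` and changes the quadratic form by `d² (x̄ᵢ - x̄ⱼ)(ȳᵢ - ȳⱼ)`; by
minimality this is never negative, i.e. `ȳ` monovaries with `x̄`.
-/

open Finset Equiv

theorem sum_comp_swap_mul_sub_sum_mul {ι α : Type*} [Fintype ι] [DecidableEq ι] [CommRing α]
    (f g : ι → α) {i j : ι} (hij : i ≠ j) :
    ∑ k, f (swap i j k) * g k - ∑ k, f k * g k = (f j - f i) * (g i - g j) := by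
  rw [← sum_sub_distrib, Fintype.sum_eq_add i j hij fun k hk => by
    rw [swap_apply_of_ne_of_ne hk.1 hk.2, sub_self]]
  simp only [swap_apply_left, swap_apply_right]
  ring

/-- A converse of the rearrangement inequality `Monovary.sum_smul_comp_perm_le_sum_smul`. -/
theorem monovary_of_sum_comp_swap_mul_le {ι α : Type*} [Fintype ι] [DecidableEq ι]
    [CommRing α] [LinearOrder α] [IsStrictOrderedRing α] {f g : ι → α}
    (h : ∀ i j, ∑ k, f (swap i j k) * g k ≤ ∑ k, f k * g k) : Monovary f g := by
  intro i j hg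
  by_contra! hf
  have hswap := sum_comp_swap_mul_sub_sum_mul f g (ne_of_apply_ne g hg.ne)
  have hpos : 0 < (f i - f j) * (g j - g i) := mul_pos (sub_pos.2 hf) (sub_pos.2 hg)
  linarith [h i j]

theorem sq_sum_add_sum_sq_sub_comp_perm {ι α : Type*} [Fintype ι] [CommRing α]
    (x z : ι → α) (σ : Perm ι) :
    (∑ k, (x k - z (σ k))) ^ 2 + ∑ k, (x k - z (σ k)) ^ 2
      = (∑ k, (x k - z k)) ^ 2 + ∑ k, (x k - z k) ^ 2
        + 2 * (∑ k, z k * x k - ∑ k, z (σ k) * x k) := by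
  simp only [sum_sub_distrib, sub_sq', sum_add_distrib, Equiv.sum_comp σ z,
    Equiv.sum_comp σ (z · ^ 2), ← mul_sum, mul_assoc, mul_comm (x _)]
  ring

theorem norm_sq_sum_smul_of_triangular {ι V : Type*} [Fintype ι]
    [NormedAddCommGroup V] [InnerProductSpace ℝ V] {d : ℝ} {b : ι → V}
    (hnorm : ∀ i, ‖b i‖ = d) (hinner : ∀ i j, i ≠ j → (inner ℝ (b i) (b j) : ℝ) = d ^ 2 / 2)
    (c : ι → ℝ) :
    ‖∑ i, c i • b i‖ ^ 2 = d ^ 2 / 2 * ((∑ i, c i) ^ 2 + ∑ i, c i ^ 2) := by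
  classical
  have hgram : ∀ k l, (inner ℝ (b k) (b l) : ℝ) = d ^ 2 / 2 + if k = l then d ^ 2 / 2 else 0 := by
    intro k l
    split_ifs with h
    · rw [h, real_inner_self_eq_norm_sq, hnorm]; ring
    · rw [hinner k l h, add_zero]
  rw [← real_inner_self_eq_norm_sq]
  simp only [sum_inner, inner_sum, real_inner_smul_left, real_inner_smul_right, hgram, mul_add,
    sum_add_distrib, mul_ite, mul_zero, sum_ite_eq', mem_univ, if_true]
  simp only [← mul_sum, ← sum_mul, ← mul_assoc, ← sq]
  ring

theorem triangular_closest_vector_monotone_general {V : Type*}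
    [NormedAddCommGroup V] [InnerProductSpace ℝ V]
    {n : ℕ} (d : ℝ) (hd : 0 < d) (b : Fin n → V)
    (hnorm : ∀ i, ‖b i‖ = d)
    (hinner : ∀ i j, i ≠ j → (inner ℝ (b i) (b j) : ℝ) = d ^ 2 / 2)
    (xbar : Fin n → ℝ) (ybar : Fin n → ℤ)
    (hmin : ∀ z : Fin n → ℤ,
      ‖∑ i, (xbar i - (ybar i : ℝ)) • b i‖ ≤ ‖∑ i, (xbar i - (z i : ℝ)) • b i‖) :
    ∀ i j : Fin n, xbar i < xbar j → ybar i ≤ ybar j := by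
  have hmono : Monovary (fun k => (ybar k : ℝ)) xbar := by
    refine monovary_of_sum_comp_swap_mul_le fun i j => ?_
    have h := pow_le_pow_left₀ (norm_nonneg _) (hmin (ybar ∘ swap i j)) 2
    rw [norm_sq_sum_smul_of_triangular hnorm hinner, norm_sq_sum_smul_of_triangular hnorm hinner]
      at h
    have hexpand := sq_sum_add_sum_sq_sub_comp_perm xbar (fun k => (ybar k : ℝ)) (swap i j)
    simp only [Function.comp_apply] at h hexpand
    rw [hexpand] at h
    linarith [le_of_mul_le_mul_left h (by positivity : (0 : ℝ) < d ^ 2 / 2)]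
  exact fun i j hx => Int.cast_le.1 (hmono hx)

/-- Monotonicity of closest-vector coordinates in a triangular lattice: if
`ȳ ∈ ℤⁿ` minimizes `z ↦ ‖Σ (x̄_i − z_i) b_i‖` over `ℤⁿ`, where the `b_i` form a
triangular basis (`‖b_i‖ = d`, `⟨b_i, b_j⟩ = d²/2` for `i ≠ j`), then
`x̄_i < x̄_j` implies `ȳ_i ≤ ȳ_j`. -/
theorem triangular_closest_vector_monotone {V : Type*}
    [NormedAddCommGroup V] [InnerProductSpace ℝ V]
    {n : ℕ} (hn : 1 ≤ n) (d : ℝ) (hd : 0 < d) (b : Fin n → V)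
    (hnorm : ∀ i, ‖b i‖ = d)
    (hinner : ∀ i j, i ≠ j → (inner ℝ (b i) (b j) : ℝ) = d ^ 2 / 2)
    (xbar : Fin n → ℝ) (ybar : Fin n → ℤ)
    (hmin : ∀ z : Fin n → ℤ,
      ‖∑ i, (xbar i - (ybar i : ℝ)) • b i‖ ≤ ‖∑ i, (xbar i - (z i : ℝ)) • b i‖) :
    ∀ i j : Fin n, xbar i < xbar j → ybar i ≤ ybar j :=
  triangular_closest_vector_monotone_general d hd b hnorm hinner xbar ybar hmin
end

section
/- Correctness of the closest-vector algorithm on the unit cube (Algorithm 1 candidate restriction). Let d > 0, n ≥ 1, and let b₁, …, bₙ be vectors in a real inner product space with ‖b_i‖ = d for all i and ⟨b_i, b_j⟩ = d²/2 for all i ≠ j. Let x̄ ∈ ℝⁿ with 0 ≤ x̄_i < 1 for all i, and let σ be a permutation of {1, …, n} sorting the coordinates in ascending order, i.e. x̄_{σ(1)} ≤ x̄_{σ(2)} ≤ … ≤ x̄_{σ(n)}. For k ∈ {1, …, n+1} define the candidate y^{(k)} ∈ {0,1}ⁿ by y^{(k)}_{σ(i)} = 0 for i < k and y^{(k)}_{σ(i)}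 = 1 for i ≥ k (so y^{(1)} is the all-ones vector and y^{(n+1)} is the zero vector). Then there exists k ∈ {1, …, n+1} such that ‖Σ_{i=1}^n (x̄_i − y^{(k)}_i) b_i‖ ≤ ‖Σ_{i=1}^n (x̄_i − z_i) b_i‖ for every z ∈ ℤⁿ; i.e. the minimum over the full lattice ℤⁿ is attained at one of the n+1 candidates. -/
/-!
With `c = x̄ - z`, the Gram matrix `(d²/2)(I + J)` of a triangular basis gives
`‖∑ cᵢ bᵢ‖² = (d²/2) ((∑ cᵢ)² + ∑ cᵢ²)`, so it suffices to compare this quadratic form.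
For an integer vector `w` with `T = ∑ wᵢ` and `A = {i | wᵢ ≥ 1}`, coordinatewise
`(xᵢ - wᵢ)² ≥ xᵢ² + [i ∈ A](1 - 2xᵢ) + |wᵢ - [i ∈ A]|`, and the last terms add up to at least
`|T - #A|`. Now take the candidate with ones on the `m` largest coordinates of `x̄`, where `m`
is `T` clamped to `[0, n]`: clamping only brings `m` closer to `∑ x̄ᵢ` and to `#A`, and since
`1 - 2xᵢ ∈ (-1, 1]` decreases with `xᵢ`, putting the ones on the largest coordinates costs at most
`∑_{i ∈ A} (1 - 2xᵢ) + |m - #A|`.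
-/

open Finset

def triangularQuadForm {ι : Type*} [Fintype ι] (c : ι → ℝ) : ℝ :=
  (∑ i, c i) ^ 2 + ∑ i, c i ^ 2

section Triangular

variable {V ι : Type*} [NormedAddCommGroup V] [InnerProductSpace ℝ V] [Fintype ι]
  {d : ℝ} {b : ι → V}

theorem norm_sum_smul_sq_of_triangular (hnorm : ∀ i, ‖b i‖ = d)
    (hinner : ∀ i j, i ≠ j → inner ℝ (b i) (b j) = d ^ 2 / 2) (c : ι → ℝ) :
    ‖∑ i, c i • b i‖ ^ 2 = d ^ 2 / 2 * triangularQuadForm c := by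
  classical
  have hgram : ∀ i j, inner ℝ (b i) (b j) = d ^ 2 / 2 + if i = j then d ^ 2 / 2 else 0 := by
    intro i j
    by_cases h : i = j
    · subst h
      rw [real_inner_self_eq_norm_sq, hnorm, if_pos rfl]
      ring
    · rw [hinner i j h, if_neg h, add_zero]
  rw [← real_inner_self_eq_norm_sq, sum_inner]
  simp_rw [inner_sum, real_inner_smul_left, real_inner_smul_right, hgram, mul_add, mul_ite,
    mul_zero, sum_add_distrib, sum_ite_eq]
  simp only [mem_univ, if_true, triangularQuadForm, sq, mul_add, mul_sum, sum_mul]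
  congr 1 <;> refine sum_congr rfl fun i _ => ?_
  · exact sum_congr rfl fun j _ => by ring
  · ring

theorem norm_sum_smul_le_of_triangular (hnorm : ∀ i, ‖b i‖ = d)
    (hinner : ∀ i j, i ≠ j → inner ℝ (b i) (b j) = d ^ 2 / 2) {c c' : ι → ℝ}
    (h : triangularQuadForm c ≤ triangularQuadForm c') :
    ‖∑ i, c i • b i‖ ≤ ‖∑ i, c' i • b i‖ := by
  rw [← pow_le_pow_iff_left₀ (norm_nonneg _) (norm_nonneg _) two_ne_zero,
    norm_sum_smul_sq_of_triangular hnorm hinner, norm_sum_smul_sq_of_triangular hnorm hinner]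
  gcongr

end Triangular

theorem triangularQuadForm_comp_equiv {ι κ : Type*} [Fintype ι] [Fintype κ] (e : κ ≃ ι)
    (c : ι → ℝ) : triangularQuadForm (c ∘ e) = triangularQuadForm c := by
  simp only [triangularQuadForm, Function.comp_apply, e.sum_comp c, e.sum_comp fun i => c i ^ 2]

theorem sq_sub_intCast_ge {x : ℝ} (hx : 0 ≤ x ∧ x < 1) (w : ℤ) :
    x ^ 2 + (if 1 ≤ w then 1 - 2 * x else 0) + |(w : ℝ) - if 1 ≤ w then 1 else 0|
      ≤ (x - w) ^ 2 := by
  obtain ⟨hx0, hx1⟩ := hx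
  split_ifs with hw
  · have hw' : (1 : ℝ) ≤ w := by exact_mod_cast hw
    have hsq : (w - 1 : ℝ) ≤ (w - 1) ^ 2 := by exact_mod_cast Int.le_self_sq (w - 1)
    rw [abs_of_nonneg (by linarith)]
    nlinarith
  · have hw' : (w : ℝ) ≤ 0 := by exact_mod_cast (by omega : w ≤ 0)
    have hsq : (-w : ℝ) ≤ (-w) ^ 2 := by exact_mod_cast Int.le_self_sq (-w)
    rw [sub_zero, abs_of_nonpos hw']
    nlinarith

section QuadForm

variable {ι : Type*} [Fintype ι]

theorem triangularQuadForm_sub_intCast_ge {x : ι → ℝ} (hx : ∀ i, 0 ≤ x i ∧ x i < 1)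
    (w : ι → ℤ) :
    (∑ i, x i - ∑ i, (w i : ℝ)) ^ 2 + ∑ i, x i ^ 2 + ∑ i with 1 ≤ w i, (1 - 2 * x i)
        + |∑ i, (w i : ℝ) - #{i | 1 ≤ w i}|
      ≤ triangularQuadForm (fun i => x i - w i) := by
  have hsum := sum_le_sum fun i (_ : i ∈ univ) => sq_sub_intCast_ge (hx i) (w i)
  have habs := abs_sum_le_sum_abs (fun i => (w i : ℝ) - if 1 ≤ w i then 1 else 0) univ
  simp only [sum_add_distrib, ← sum_filter, sum_sub_distrib, sum_const, nsmul_eq_mul,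
    mul_one] at hsum habs ⊢
  simp only [triangularQuadForm, sum_sub_distrib]
  linarith

theorem triangularQuadForm_sub_indicator [DecidableEq ι] (x : ι → ℝ) (U : Finset ι) :
    triangularQuadForm (fun i => x i - if i ∈ U then 1 else 0)
      = (∑ i, x i - #U) ^ 2 + ∑ i, x i ^ 2 + ∑ i ∈ U, (1 - 2 * x i) := by
  have hsq : ∀ i, (x i - if i ∈ U then 1 else 0) ^ 2
      = x i ^ 2 + if i ∈ U then 1 - 2 * x i else 0 := by
    intro i; split_ifs <;> ring
  simp only [triangularQuadForm, hsq, sum_sub_distrib, sum_add_distrib, ← sum_filter,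
    filter_mem_eq_inter, univ_inter, sum_const, nsmul_eq_mul, mul_one]
  ring

end QuadForm

theorem sum_sub_sum_le_abs_card_sub {α : Type*} {P Q : Finset α} {g : α → ℝ} {t : ℝ}
    (ht : |t| ≤ 1) (hP : ∀ u ∈ P, g u ≤ t) (hQ : ∀ v ∈ Q, t ≤ g v) :
    ∑ u ∈ P, g u - ∑ v ∈ Q, g v ≤ |(#P : ℝ) - #Q| :=
  calc ∑ u ∈ P, g u - ∑ v ∈ Q, g v ≤ #P * t - #Q * t := by
        gcongr
        · simpa using sum_le_card_nsmul P g t hP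
        · simpa using card_nsmul_le_sum Q g t hQ
    _ = ((#P : ℝ) - #Q) * t := by ring
    _ ≤ |((#P : ℝ) - #Q) * t| := le_abs_self _
    _ ≤ |(#P : ℝ) - #Q| := by
        rw [abs_mul]
        exact mul_le_of_le_one_right (abs_nonneg _) ht

theorem sum_le_sum_add_abs_card_sub_of_isUpperSet {α : Type*} [LinearOrder α]
    {g : α → ℝ} (hg : Antitone g) (hg1 : ∀ i, |g i| ≤ 1) {U : Finset α}
    (hU : IsUpperSet (U : Set α)) (A : Finset α) :
    ∑ i ∈ U, g i ≤ ∑ i ∈ A, g i + |(#U : ℝ) - #A| := by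
  have hsep : ∀ u ∈ U \ A, ∀ v ∈ A \ U, g u ≤ g v := fun u hu v hv =>
    hg (le_of_lt (lt_of_not_ge fun huv => (mem_sdiff.1 hv).2 (hU huv (mem_sdiff.1 hu).1)))
  obtain ⟨t, ht, hP, hQ⟩ :
      ∃ t, |t| ≤ 1 ∧ (∀ u ∈ U \ A, g u ≤ t) ∧ ∀ v ∈ A \ U, t ≤ g v := by
    rcases (U \ A).eq_empty_or_nonempty with hP | hP
    · exact ⟨-1, by simp, by simp [hP], fun v _ => (abs_le.1 (hg1 v)).1⟩
    · obtain ⟨u, hu, hmax⟩ := exists_mem_eq_sup' hP g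
      exact ⟨g u, hg1 u, fun u' hu' => hmax ▸ le_sup' g hu', hsep u hu⟩
  have hcard : (#(U \ A) : ℝ) - #(A \ U) = #U - #A := by
    have hU := card_sdiff_add_card_inter U A
    have hA := card_sdiff_add_card_inter A U
    rw [inter_comm] at hA
    rw [← hU, ← hA]
    push_cast
    ring
  have key := sum_sub_sum_le_abs_card_sub ht hP hQ
  rw [sum_sdiff_sub_sum_sdiff, hcard] at key
  linarith

theorem abs_clamp_sub_le {t s N : ℝ} (hs : s ∈ Set.Icc 0 N) :
    |max 0 (min N t) - s| ≤ |t - s| := by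
  have hN : (0 : ℝ) ≤ N := hs.1.trans hs.2
  have := Set.abs_projIcc_sub_projIcc hN (c := t) (d := s)
  rwa [Set.projIcc_of_mem hN hs, Set.coe_projIcc] at this

theorem Fin.card_filter_le_val (n k : ℕ) : #{i : Fin n | k ≤ (i : ℕ)} = n - k := by
  have h := card_filter_add_card_filter_not (s := univ) fun i : Fin n => (i : ℕ) < k
  simp only [not_lt, Fin.card_filter_val_lt, card_univ, Fintype.card_fin] at h
  omega

theorem exists_threshold_triangularQuadForm_le {n : ℕ} {x : Fin n → ℝ} (hmono : Monotone x)
    (hx : ∀ i, 0 ≤ x i ∧ x i < 1) (w : Fin n → ℤ) :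
    ∃ k : Fin (n + 1), triangularQuadForm (fun i => x i - if (i : ℕ) < k then 0 else 1)
      ≤ triangularQuadForm (fun i => x i - w i) := by
  set T := ∑ i, (w i : ℝ)
  set A : Finset (Fin n) := {i | 1 ≤ w i}
  set m := (max 0 (min (n : ℤ) (∑ i, w i))).toNat
  have hm : (m : ℝ) = max 0 (min (n : ℝ) T) := by
    rw [← Int.cast_natCast, Int.toNat_of_nonneg (le_max_left _ _)]
    push_cast
    rfl
  have hmn : m ≤ n := by omega
  refine ⟨⟨n - m, by omega⟩, ?_⟩
  set U : Finset (Fin n) := {i | n - m ≤ (i : ℕ)}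
  have hUcard : #U = m := by rw [Fin.card_filter_le_val]; omega
  have hUupper : IsUpperSet (U : Set (Fin n)) := fun i j hij hi => by
    simp only [U, coe_filter, mem_univ, true_and, Set.mem_ofPred_eq] at hi ⊢
    exact hi.trans hij
  have hcand : (fun i : Fin n => x i - if (i : ℕ) < n - m then 0 else 1)
      = fun i => x i - if i ∈ U then 1 else 0 := by
    ext i
    simp only [U, mem_filter, mem_univ, true_and, ← not_lt, ite_not]
  simp only [hcand, triangularQuadForm_sub_indicator, hUcard]
  refine le_trans ?_ (triangularQuadForm_sub_intCast_ge hx w)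
  have hX : ∑ i, x i ∈ Set.Icc (0 : ℝ) n := by
    constructor
    · exact sum_nonneg fun i _ => (hx i).1
    · simpa using sum_le_sum fun i (_ : i ∈ univ) => (hx i).2.le
  have hA : (#A : ℝ) ∈ Set.Icc (0 : ℝ) n :=
    ⟨by positivity, by exact_mod_cast (card_le_univ A).trans_eq (Fintype.card_fin n)⟩
  have hsum : (∑ i, x i - m) ^ 2 ≤ (∑ i, x i - T) ^ 2 := by
    rw [sq_le_sq, abs_sub_comm, abs_sub_comm _ T, hm]
    exact abs_clamp_sub_le hX
  have hcount : |(m : ℝ) - #A| ≤ |T - #A| := hm ▸ abs_clamp_sub_le hA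
  have hrearr := sum_le_sum_add_abs_card_sub_of_isUpperSet (g := fun i => 1 - 2 * x i)
    (fun i j hij => by linarith [hmono hij])
    (fun i => abs_le.2 ⟨by linarith [(hx i).2], by linarith [(hx i).1]⟩) hUupper A
  rw [hUcard] at hrearr
  linarith

theorem triangular_cv_algorithm_candidates_general {V : Type*}
    [NormedAddCommGroup V] [InnerProductSpace ℝ V]
    {n : ℕ} (d : ℝ) (b : Fin n → V)
    (hnorm : ∀ i, ‖b i‖ = d)
    (hinner : ∀ i j, i ≠ j → (inner ℝ (b i) (b j) : ℝ) = d ^ 2 / 2)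
    (xbar : Fin n → ℝ) (hx : ∀ i, 0 ≤ xbar i ∧ xbar i < 1)
    (σ : Equiv.Perm (Fin n))
    (hσ : ∀ i j : Fin n, i ≤ j → xbar (σ i) ≤ xbar (σ j))
    (y : Fin (n + 1) → Fin n → ℤ)
    (hy : ∀ (k : Fin (n + 1)) (t : Fin n),
      y k t = if ((σ.symm t : Fin n) : ℕ) < (k : ℕ) then 0 else 1) :
    ∃ k : Fin (n + 1), ∀ z : Fin n → ℤ,
      ‖∑ i, (xbar i - (y k i : ℝ)) • b i‖ ≤ ‖∑ i, (xbar i - (z i : ℝ)) • b i‖ := by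
  obtain ⟨k₀, -, hk₀⟩ := exists_min_image univ
    (fun k => triangularQuadForm fun i => xbar i - y k i) univ_nonempty
  refine ⟨k₀, fun z => norm_sum_smul_le_of_triangular hnorm hinner ?_⟩
  obtain ⟨k, hk⟩ := exists_threshold_triangularQuadForm_le (x := xbar ∘ σ) hσ
    (fun i => hx (σ i)) (z ∘ σ)
  have hyσ : (fun i => xbar i - y k i) ∘ σ
      = fun i => (xbar ∘ σ) i - if (i : ℕ) < k then 0 else 1 := by
    ext i
    simp [hy]
  calc triangularQuadForm (fun i => xbar i - y k₀ i)
      ≤ triangularQuadForm (fun i => xbar i - y k i) := hk₀ k (mem_univ k)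
    _ = triangularQuadForm ((fun i => xbar i - y k i) ∘ σ) :=
        (triangularQuadForm_comp_equiv σ _).symm
    _ ≤ triangularQuadForm ((fun i => xbar i - z i) ∘ σ) := hyσ ▸ hk
    _ = triangularQuadForm (fun i => xbar i - z i) := triangularQuadForm_comp_equiv σ _

/-- Correctness of the closest-vector algorithm on the unit cube (Algorithm 1
candidate restriction). For a triangular basis `b₁, …, bₙ` (`‖b_i‖ = d`,
`⟨b_i, b_j⟩ = d²/2` for `i ≠ j`), a point `x̄ ∈ [0,1)ⁿ`, and a permutation `σ`
sorting its coordinates in ascending order, the minimum of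
`z ↦ ‖Σ (x̄_i − z_i) b_i‖` over all `z ∈ ℤⁿ` is attained at one of the `n+1`
candidates `y⁽ᵏ⁾ ∈ {0,1}ⁿ` given by `y⁽ᵏ⁾_{σ(i)} = 0` for `i < k` and `= 1`
for `i ≥ k` (0-based `k ∈ {0, …, n}`). -/
theorem triangular_cv_algorithm_candidates {V : Type*}
    [NormedAddCommGroup V] [InnerProductSpace ℝ V]
    {n : ℕ} (hn : 1 ≤ n) (d : ℝ) (hd : 0 < d) (b : Fin n → V)
    (hnorm : ∀ i, ‖b i‖ = d)
    (hinner : ∀ i j, i ≠ j → (inner ℝ (b i) (b j) : ℝ) = d ^ 2 / 2)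
    (xbar : Fin n → ℝ) (hx : ∀ i, 0 ≤ xbar i ∧ xbar i < 1)
    (σ : Equiv.Perm (Fin n))
    (hσ : ∀ i j : Fin n, i ≤ j → xbar (σ i) ≤ xbar (σ j))
    (y : Fin (n + 1) → Fin n → ℤ)
    (hy : ∀ (k : Fin (n + 1)) (t : Fin n),
      y k t = if ((σ.symm t : Fin n) : ℕ) < (k : ℕ) then 0 else 1) :
    ∃ k : Fin (n + 1), ∀ z : Fin n → ℤ,
      ‖∑ i, (xbar i - (y k i : ℝ)) • b i‖ ≤ ‖∑ i, (xbar i - (z i : ℝ)) • b i‖ :=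
  triangular_cv_algorithm_candidates_general d b hnorm hinner xbar hx σ hσ y hy
end
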